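/- Coercion soundness for full subtyping: the coercion translation ⟦A ≤ B⟧ from full-subtyping derivations in λ_{[]⟨⟩}^{≤full} to terms of λ_{[]⟨⟩} produces, for every derivation of A ≤ B, a closed term of type A → B; consequently the translation ⟦M ▷ A⟧ = ⟦B ≤ A⟧ ⟦M⟧ (where M has type B) preserves typing: Δ;Γ ⊢ M : A implies Δ;Γ ⊢ ⟦M⟧ : A. -/

import Mathlib

namespace Stmt15

abbrev Label := ℕ

/-- Types of λ_{[]⟨⟩}^{≤full}. -/
inductive Ty : Type where
  | tvar : ℕ → Ty
  | arrow : Ty → Ty → Ty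
  | variant : List (Label × Ty) → Ty
  | record : List (Label × Ty) → Ty

/-- Full structural subtyping: covariant in variants, records and codomains,
contravariant in function domains. -/
inductive Sub : Ty → Ty → Prop where
  | tvar (n : ℕ) : Sub (.tvar n) (.tvar n)
  | arrow {A A' B B'} : Sub A' A → Sub B B' → Sub (.arrow A B) (.arrow A' B')
  | variant {R R'} :
      (∀ ℓ A, List.lookup ℓ R = some A → ∃ A', List.lookup ℓ R' = some A') →
      (∀ ℓ A A', List.lookup ℓ R = some A → List.lookup ℓ R' = some A' → Sub A A') →
      Sub (.variant R) (.variant R')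
  | record {R R'} :
      (∀ ℓ A', List.lookup ℓ R' = some A' → ∃ A, List.lookup ℓ R = some A) →
      (∀ ℓ A A', List.lookup ℓ R = some A → List.lookup ℓ R' = some A' → Sub A A') →
      Sub (.record R) (.record R')

/-- Typed terms; `upcast M A` is the explicit upcast M ▷ A. -/
inductive Tm : Type where
  | var : ℕ → Tm
  | lam : Ty → Tm → Tm
  | app : Tm → Tm → Tm
  | inj : Label → Tm → Ty → Tm
  | case : Tm → List (Label × Tm) → Tm
  | record : List (Label × Tm) → Tm
  | proj : Tm → Label → Tm
  | upcast : Tm → Ty → Tm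

mutual
def shiftTm (c : ℕ) : Tm → Tm
  | .var n => if n < c then .var n else .var (n + 1)
  | .lam A M => .lam A (shiftTm (c + 1) M)
  | .app M N => .app (shiftTm c M) (shiftTm c N)
  | .inj ℓ M A => .inj ℓ (shiftTm c M) A
  | .case M Bs => .case (shiftTm c M) (shiftLs (c + 1) Bs)
  | .record es => .record (shiftLs c es)
  | .proj M ℓ => .proj (shiftTm c M) ℓ
  | .upcast M A => .upcast (shiftTm c M) A
def shiftLs (c : ℕ) : List (Label × Tm) → List (Label × Tm)
  | [] => []
  | (ℓ, M) :: es => (ℓ, shiftTm c M) :: shiftLs c es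
end

mutual
/-- Capture-avoiding substitution of N for de Bruijn index k. -/
def substTm (k : ℕ) (N : Tm) : Tm → Tm
  | .var n => if n = k then N else if n < k then .var n else .var (n - 1)
  | .lam A M => .lam A (substTm (k + 1) (shiftTm 0 N) M)
  | .app M₁ M₂ => .app (substTm k N M₁) (substTm k N M₂)
  | .inj ℓ M A => .inj ℓ (substTm k N M) A
  | .case M Bs => .case (substTm k N M) (substLs (k + 1) (shiftTm 0 N) Bs)
  | .record es => .record (substLs k N es)
  | .proj M ℓ => .proj (substTm k N M) ℓ
  | .upcast M A => .upcast (substTm k N M) A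
def substLs (k : ℕ) (N : Tm) : List (Label × Tm) → List (Label × Tm)
  | [] => []
  | (ℓ, M) :: es => (ℓ, substTm k N M) :: substLs k N es
end

mutual
/-- Replace each occurrence of variable k by (var k ▷ A), keeping binders. -/
def replaceUp (A : Ty) (k : ℕ) : Tm → Tm
  | .var n => if n = k then .upcast (.var n) A else .var n
  | .lam B M => .lam B (replaceUp A (k + 1) M)
  | .app M N => .app (replaceUp A k M) (replaceUp A k N)
  | .inj ℓ M B => .inj ℓ (replaceUp A k M) B
  | .case M Bs => .case (replaceUp A k M) (replaceUpLs A (k + 1) Bs)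
  | .record es => .record (replaceUpLs A k es)
  | .proj M ℓ => .proj (replaceUp A k M) ℓ
  | .upcast M B => .upcast (replaceUp A k M) B
def replaceUpLs (A : Ty) (k : ℕ) : List (Label × Tm) → List (Label × Tm)
  | [] => []
  | (ℓ, M) :: es => (ℓ, replaceUp A k M) :: replaceUpLs A k es
end

/-- Typing of λ_{[]⟨⟩}^{≤full}. -/
inductive HasTy : List Ty → Tm → Ty → Prop where
  | var {Γ n A} : Γ[n]? = some A → HasTy Γ (.var n) A
  | lam {Γ A B M} : HasTy (A :: Γ) M B → HasTy Γ (.lam A M) (.arrow A B)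
  | app {Γ A B M N} : HasTy Γ M (.arrow A B) → HasTy Γ N A → HasTy Γ (.app M N) B
  | inj {Γ ℓ R A M} : List.lookup ℓ R = some A → HasTy Γ M A →
      HasTy Γ (.inj ℓ M (.variant R)) (.variant R)
  | case {Γ R M Bs C} : HasTy Γ M (.variant R) →
      (∀ ℓ A, List.lookup ℓ R = some A → (List.lookup ℓ Bs).isSome) →
      (∀ ℓ A N, List.lookup ℓ R = some A → List.lookup ℓ Bs = some N →
        HasTy (A :: Γ) N C) →
      HasTy Γ (.case M Bs) C
  | record {Γ} {es : List (Label × Tm)} {R : List (Label × Ty)} :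
      es.map Prod.fst = R.map Prod.fst →
      (∀ (i : ℕ) p q, es[i]? = some p → R[i]? = some q →
        HasTy Γ (Prod.snd p) (Prod.snd q)) →
      HasTy Γ (.record es) (.record R)
  | proj {Γ R M ℓ A} : HasTy Γ M (.record R) → List.lookup ℓ R = some A →
      HasTy Γ (.proj M ℓ) A
  | upcast {Γ M A B} : HasTy Γ M A → Sub A B → HasTy Γ (.upcast M B) B


/-- Typing of the target calculus λ_{[]⟨⟩} (no upcast rule). -/
inductive HasTyT : List Ty → Tm → Ty → Prop where
  | var {Γ n A} : Γ[n]? = some A → HasTyT Γ (.var n) A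
  | lam {Γ A B M} : HasTyT (A :: Γ) M B → HasTyT Γ (.lam A M) (.arrow A B)
  | app {Γ A B M N} : HasTyT Γ M (.arrow A B) → HasTyT Γ N A → HasTyT Γ (.app M N) B
  | inj {Γ ℓ R A M} : List.lookup ℓ R = some A → HasTyT Γ M A →
      HasTyT Γ (.inj ℓ M (.variant R)) (.variant R)
  | case {Γ R M Bs C} : HasTyT Γ M (.variant R) →
      (∀ ℓ A, List.lookup ℓ R = some A → (List.lookup ℓ Bs).isSome) →
      (∀ ℓ A N, List.lookup ℓ R = some A → List.lookup ℓ Bs = some N →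
        HasTyT (A :: Γ) N C) →
      HasTyT Γ (.case M Bs) C
  | record {Γ} {es : List (Label × Tm)} {R : List (Label × Ty)} :
      es.map Prod.fst = R.map Prod.fst →
      (∀ (i : ℕ) p q, es[i]? = some p → R[i]? = some q →
        HasTyT Γ (Prod.snd p) (Prod.snd q)) →
      HasTyT Γ (.record es) (.record R)
  | proj {Γ R M ℓ A} : HasTyT Γ M (.record R) → List.lookup ℓ R = some A →
      HasTyT Γ (.proj M ℓ) A

/-! ### Full subtyping derivations as data. -/

mutual
inductive FSub : Ty → Ty → Type where
  | tvar (n : ℕ) : FSub (.tvar n) (.tvar n)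
  | arrow {A A' B B'} : FSub A' A → FSub B B' → FSub (.arrow A B) (.arrow A' B')
  | variant {R R'} : FSubRowV R R' → FSub (.variant R) (.variant R')
  | record {R R'} : FSubRowR R R' → FSub (.record R) (.record R')
inductive FSubRowV : List (Label × Ty) → List (Label × Ty) → Type where
  | nil {R'} : FSubRowV [] R'
  | cons {ℓ A A' R R'} : List.lookup ℓ R' = some A' → FSub A A' →
      FSubRowV R R' → FSubRowV ((ℓ, A) :: R) R'
inductive FSubRowR : List (Label × Ty) → List (Label × Ty) → Type where
  | nil {R} : FSubRowR R []
  | cons {ℓ A A' R R'} : List.lookup ℓ R = some A → FSub A A' →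
      FSubRowR R R' → FSubRowR R ((ℓ, A') :: R')
end

/-! ### The coercion translation. -/

mutual
/-- ⟦A ≤ B⟧: the coercion function of type A → B. -/
def coerce : {A B : Ty} → FSub A B → Tm
  | _, _, .tvar n => .lam (.tvar n) (.var 0)
  | _, _, .arrow (A := A) (A' := A') (B := B) s₁ s₂ =>
      .lam (.arrow A B) (.lam A'
        (.app (coerce s₂) (.app (.var 1) (.app (coerce s₁) (.var 0)))))
  | _, _, .variant (R := R) (R' := R') sr =>
      .lam (.variant R) (.case (.var 0) (coerceBrs R' sr))
  | _, _, .record (R := R) sr =>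
      .lam (.record R) (.record (coerceFlds sr))
/-- Case branches ℓ_i y ↦ (ℓ_i (⟦A_i ≤ A_i'⟧ y))^{⟨R'⟩}. -/
def coerceBrs : (R' : List (Label × Ty)) → {R : List (Label × Ty)} →
    FSubRowV R R' → List (Label × Tm)
  | _, _, .nil => []
  | R', _, .cons (ℓ := ℓ) _ s sr =>
      (ℓ, Tm.inj ℓ (.app (coerce s) (.var 0)) (.variant R')) :: coerceBrs R' sr
/-- Record fields ℓ_i = ⟦A_i ≤ A_i'⟧ x.ℓ_i. -/
def coerceFlds : {R R' : List (Label × Ty)} → FSubRowR R R' → List (Label × Tm)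
  | _, _, .nil => []
  | _, _, .cons (ℓ := ℓ) _ s sr =>
      (ℓ, Tm.app (coerce s) (.proj (.var 0) ℓ)) :: coerceFlds sr
end

/-! ### Source typing derivations as data, and the upcast-eliminating
translation ⟦M ▷ A⟧ = ⟦B ≤ A⟧ ⟦M⟧. -/

mutual
inductive FDeriv : List Ty → Tm → Ty → Type where
  | var {Γ n A} : Γ[n]? = some A → FDeriv Γ (.var n) A
  | lam {Γ A B M} : FDeriv (A :: Γ) M B → FDeriv Γ (.lam A M) (.arrow A B)
  | app {Γ A B M N} : FDeriv Γ M (.arrow A B) → FDeriv Γ N A → FDeriv Γ (.app M N) B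
  | inj {Γ ℓ R A M} : List.lookup ℓ R = some A → FDeriv Γ M A →
      FDeriv Γ (.inj ℓ M (.variant R)) (.variant R)
  | case {Γ R M Bs C} : FDeriv Γ M (.variant R) → FBranches Γ R Bs C →
      FDeriv Γ (.case M Bs) C
  | record {Γ es R} : FFields Γ es R → FDeriv Γ (.record es) (.record R)
  | proj {Γ R M ℓ A} : FDeriv Γ M (.record R) → List.lookup ℓ R = some A →
      FDeriv Γ (.proj M ℓ) A
  | upcast {Γ M A B} : FDeriv Γ M A → FSub A B → FDeriv Γ (.upcast M B) B
inductive FBranches : List Ty → List (Label × Ty) → List (Label × Tm) → Ty → Type where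
  | nil {Γ C} : FBranches Γ [] [] C
  | cons {Γ ℓ A N R Bs C} : FDeriv (A :: Γ) N C → FBranches Γ R Bs C →
      FBranches Γ ((ℓ, A) :: R) ((ℓ, N) :: Bs) C
inductive FFields : List Ty → List (Label × Tm) → List (Label × Ty) → Type where
  | nil {Γ} : FFields Γ [] []
  | cons {Γ ℓ M A es R} : FDeriv Γ M A → FFields Γ es R →
      FFields Γ ((ℓ, M) :: es) ((ℓ, A) :: R)
end

mutual
/-- The translation from λ_{[]⟨⟩}^{≤full} to λ_{[]⟨⟩}: homomorphic except
⟦M ▷ A⟧ = ⟦B ≤ A⟧ ⟦M⟧ (where M has type B). -/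
def trD : {Γ : List Ty} → {M : Tm} → {A : Ty} → FDeriv Γ M A → Tm
  | _, _, _, .var (n := n) _ => .var n
  | _, _, _, .lam (A := A) d => .lam A (trD d)
  | _, _, _, .app d₁ d₂ => .app (trD d₁) (trD d₂)
  | _, _, _, .inj (ℓ := ℓ) (R := R) _ d => .inj ℓ (trD d) (.variant R)
  | _, _, _, .case d db => .case (trD d) (trBs db)
  | _, _, _, .record df => .record (trFs df)
  | _, _, _, .proj (ℓ := ℓ) d _ => .proj (trD d) ℓ
  | _, _, _, .upcast d s => .app (coerce s) (trD d)
def trBs : {Γ : List Ty} → {R : List (Label × Ty)} → {Bs : List (Label × Tm)} →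
    {C : Ty} → FBranches Γ R Bs C → List (Label × Tm)
  | _, _, _, _, .nil => []
  | _, _, _, _, .cons (ℓ := ℓ) d db => (ℓ, trD d) :: trBs db
def trFs : {Γ : List Ty} → {es : List (Label × Tm)} → {R : List (Label × Ty)} →
    FFields Γ es R → List (Label × Tm)
  | _, _, _, .nil => []
  | _, _, _, .cons (ℓ := ℓ) d df => (ℓ, trD d) :: trFs df
end
/-!
Each coercion ⟦A ≤ B⟧ is a λ-abstraction over a variable x : A whose body applies the
coercions of the premises to x (arrows, after coercing the argument back), to the payload
of a case branch on x (variants) or to the projections of x (records); by simultaneous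
induction over the derivation these bodies have type B. The translation of a source
derivation is homomorphic except at upcasts, where it applies such a well-typed coercion.
-/

def BranchesTy (Γ : List Ty) (R : List (Label × Ty)) (Bs : List (Label × Tm)) (C : Ty) :
    Prop :=
  ∀ ℓ A, R.lookup ℓ = some A → ∃ N, Bs.lookup ℓ = some N ∧ HasTyT (A :: Γ) N C

section TargetTyping

variable {Γ : List Ty} {ℓ : Label} {A C : Ty} {R : List (Label × Ty)} {M N : Tm}
  {Bs es : List (Label × Tm)}

theorem BranchesTy.nil : BranchesTy Γ [] Bs C := by
  intro ℓ A h
  simp at h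

theorem BranchesTy.cons (hN : HasTyT (A :: Γ) N C) (hBs : BranchesTy Γ R Bs C) :
    BranchesTy Γ ((ℓ, A) :: R) ((ℓ, N) :: Bs) C := by
  intro ℓ' A' h
  by_cases hℓ : ℓ' = ℓ
  · subst hℓ
    simp only [List.lookup_cons_self, Option.some.injEq] at h ⊢
    exact ⟨N, rfl, h ▸ hN⟩
  · simp only [List.lookup_cons, beq_false_of_ne hℓ] at h ⊢
    exact hBs ℓ' A' h

theorem HasTyT.case_of_branchesTy (hM : HasTyT Γ M (.variant R)) (hBs : BranchesTy Γ R Bs C) :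
    HasTyT Γ (.case M Bs) C := by
  refine .case hM (fun ℓ A h => ?_) (fun ℓ A N h hN => ?_)
  · obtain ⟨N, hN, -⟩ := hBs ℓ A h
    simp [hN]
  · obtain ⟨N', hN', hty⟩ := hBs ℓ A h
    rw [hN, Option.some.injEq] at hN'
    exact hN' ▸ hty

theorem HasTyT.record_nil : HasTyT Γ (.record []) (.record []) :=
  .record rfl (by simp)

theorem HasTyT.record_cons (hM : HasTyT Γ M A) (hes : HasTyT Γ (.record es) (.record R)) :
    HasTyT Γ (.record ((ℓ, M) :: es)) (.record ((ℓ, A) :: R)) := by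
  cases hes with
  | record hlabels hfields =>
    refine .record (by simpa using hlabels) fun i p q hp hq => ?_
    cases i with
    | zero =>
      simp only [List.getElem?_cons_zero, Option.some.injEq] at hp hq
      exact hp ▸ hq ▸ hM
    | succ i => exact hfields i p q hp hq

end TargetTyping

mutual
theorem hasTyT_coerce : ∀ {A B : Ty} (s : FSub A B) (Γ : List Ty),
    HasTyT Γ (coerce s) (.arrow A B)
  | _, _, .tvar _, _ => .lam (.var rfl)
  | _, _, .arrow s₁ s₂, _ =>
    .lam (.lam (.app (hasTyT_coerce s₂ _)
      (.app (.var rfl) (.app (hasTyT_coerce s₁ _) (.var rfl)))))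
  | _, _, .variant sr, _ => .lam (.case_of_branchesTy (.var rfl) (branchesTy_coerceBrs sr _))
  | _, _, .record sr, _ => .lam (hasTyT_coerceFlds sr _)
theorem branchesTy_coerceBrs : ∀ {R R' : List (Label × Ty)} (sr : FSubRowV R R') (Γ : List Ty),
    BranchesTy Γ R (coerceBrs R' sr) (.variant R')
  | _, _, .nil, _ => .nil
  | _, _, .cons hA' s sr, _ =>
    .cons (.inj hA' (.app (hasTyT_coerce s _) (.var rfl))) (branchesTy_coerceBrs sr _)
theorem hasTyT_coerceFlds : ∀ {R R' : List (Label × Ty)} (sr : FSubRowR R R') (Γ : List Ty),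
    HasTyT (.record R :: Γ) (.record (coerceFlds sr)) (.record R')
  | _, _, .nil, _ => .record_nil
  | _, _, .cons hA s sr, _ =>
    .record_cons (.app (hasTyT_coerce s _) (.proj (.var rfl) hA)) (hasTyT_coerceFlds sr _)
end

mutual
theorem hasTyT_trD : ∀ {Γ : List Ty} {M : Tm} {A : Ty} (d : FDeriv Γ M A), HasTyT Γ (trD d) A
  | _, _, _, .var h => .var h
  | _, _, _, .lam d => .lam (hasTyT_trD d)
  | _, _, _, .app d₁ d₂ => .app (hasTyT_trD d₁) (hasTyT_trD d₂)
  | _, _, _, .inj h d => .inj h (hasTyT_trD d)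
  | _, _, _, .case d db => .case_of_branchesTy (hasTyT_trD d) (branchesTy_trBs db)
  | _, _, _, .record df => hasTyT_trFs df
  | _, _, _, .proj d h => .proj (hasTyT_trD d) h
  | _, _, _, .upcast d s => .app (hasTyT_coerce s _) (hasTyT_trD d)
theorem branchesTy_trBs : ∀ {Γ : List Ty} {R : List (Label × Ty)} {Bs : List (Label × Tm)}
    {C : Ty} (db : FBranches Γ R Bs C), BranchesTy Γ R (trBs db) C
  | _, _, _, _, .nil => .nil
  | _, _, _, _, .cons d db => .cons (hasTyT_trD d) (branchesTy_trBs db)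
theorem hasTyT_trFs : ∀ {Γ : List Ty} {es : List (Label × Tm)} {R : List (Label × Ty)}
    (df : FFields Γ es R), HasTyT Γ (.record (trFs df)) (.record R)
  | _, _, _, .nil => .record_nil
  | _, _, _, .cons d df => .record_cons (hasTyT_trD d) (hasTyT_trFs df)
end

theorem coercion_soundness :
    (∀ (A B : Ty) (s : FSub A B) (Γ : List Ty),
      HasTyT Γ (coerce s) (.arrow A B)) ∧
    (∀ (Γ : List Ty) (M : Tm) (A : Ty) (d : FDeriv Γ M A),
      HasTyT Γ (trD d) A) :=
  ⟨fun _ _ s Γ => hasTyT_coerce s Γ, fun _ _ _ d => hasTyT_trD d⟩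

end Stmt15
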